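/- For a uniformly random permutation π of size n and an integer 1 ≤ k ≤ n, the variance of the size of the sub-permutation generated by the entry k equals 2(n+1)(k−1)(n−k)/((k+1)²(k+2)). -/

import Mathlib

/-!
Inserting the new largest entry `n + 1` into a permutation of `[1, …, n]` leaves the block
generated by `k` unchanged except at the `g + 1` insertion points inside it or next to it,
where `g` is the block size; there the block grows by one. Hence
`∑_{π ∈ S_{n+1}} f (g π) = ∑_{σ ∈ S_n} ((g σ + 1) f (g σ + 1) + (n - g σ) f (g σ))`,
and since `g ≡ 1` on `S_k` this recursion gives the first two moments of `g` by induction on `n`.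
-/

/-- All contiguous substrings (infixes) of a list. -/
def infixes (l : List ℕ) : List (List ℕ) := (l.tails.map List.inits).flatten

/-- `genLen l k` is the length of the longest contiguous substring of `l`
containing the entry `k` all of whose entries are `≥ k`, i.e. the size of the
sub-permutation of `l` generated by the entry `k`. -/
def genLen (l : List ℕ) (k : ℕ) : ℕ :=
  (((infixes l).filter
      (fun s => s.contains k && s.all (fun x => decide (k ≤ x)))).map
    List.length).foldr max 0

namespace List

variable {α : Type*}

theorem insertIdx_append_of_le_length {xs : List α} (ys : List α) {i : ℕ} (v : α)
    (hi : i ≤ xs.length) : (xs ++ ys).insertIdx i v = xs.insertIdx i v ++ ys := by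
  induction xs generalizing i with
  | nil => simp_all
  | cons x xs ih =>
    cases i with
    | zero => rfl
    | succ i => simp [insertIdx_succ_cons, ih (by simpa using hi)]

theorem insertIdx_length_add_append (xs ys : List α) (j : ℕ) (v : α) :
    (xs ++ ys).insertIdx (xs.length + j) v = xs ++ ys.insertIdx j v := by
  induction xs with
  | nil => simp
  | cons x xs ih => rw [length_cons, Nat.add_right_comm, cons_append, insertIdx_succ_cons, ih,
      cons_append]

theorem reverse_insertIdx {l : List α} {i : ℕ} (v : α) (hi : i ≤ l.length) :
    (l.insertIdx i v).reverse = l.reverse.insertIdx (l.length - i) v := by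
  induction l generalizing i with
  | nil => simp_all
  | cons b l ih =>
    cases i with
    | zero =>
      rw [insertIdx_zero, reverse_cons, Nat.sub_zero, ← length_reverse, insertIdx_length_self]
    | succ i =>
      rw [insertIdx_succ_cons, reverse_cons, ih (by simpa using hi), reverse_cons,
        insertIdx_append_of_le_length _ _ (by simp)]
      simp

theorem length_takeWhile_insertIdx {p : α → Bool} {v : α} (hv : p v) {l : List α} {j : ℕ}
    (hj : j ≤ l.length) :
    ((l.insertIdx j v).takeWhile p).length =
      (l.takeWhile p).length + if j ≤ (l.takeWhile p).length then 1 else 0 := by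
  induction l generalizing j with
  | nil => simp_all
  | cons b l ih =>
    cases j with
    | zero => simp [hv]
    | succ j =>
      by_cases hb : p b
      · simp [insertIdx_succ_cons, hb, ih (by simpa using hj)]
        omega
      · simp [insertIdx_succ_cons, hb]

theorem IsPrefix.length_le_length_takeWhile {p : α → Bool} {x l : List α} (h : x <+: l)
    (hx : ∀ a ∈ x, p a) : x.length ≤ (l.takeWhile p).length := by
  obtain ⟨t, rfl⟩ := h
  simp [takeWhile_append_of_pos hx]

theorem takeWhile_eq_nil_of_forall_not {p : α → Bool} {l : List α} (h : ∀ a ∈ l, ¬ p a) :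
    l.takeWhile p = [] := by
  cases l with
  | nil => rfl
  | cons a l => exact takeWhile_cons_of_neg (h a mem_cons_self)

theorem infix_append_cons_of_suffix_of_prefix {x u y w : List α} (hx : x <:+ u) (hy : y <+: w)
    (a : α) : x ++ a :: y <:+: u ++ a :: w := by
  obtain ⟨c, rfl⟩ := hx
  obtain ⟨d, rfl⟩ := hy
  exact ⟨c, d, by simp⟩

theorem permutations'Aux_eq_map_range (x : α) (s : List α) :
    permutations'Aux x s = (range (s.length + 1)).map (s.insertIdx · x) :=
  ext_getElem (by simp [length_permutations'Aux]) fun n _ _ => by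
    simp [getElem_permutations'Aux]

end List

theorem Finset.sum_range_succ_ite_le {M : Type*} [AddCommMonoid M] (x y : M) {a m : ℕ}
    (h : a ≤ m) :
    ∑ j ∈ Finset.range (m + 1), (if j ≤ a then x else y) = (a + 1) • x + (m - a) • y := by
  rw [show m + 1 = (a + 1) + (m - a) by omega, Finset.sum_range_add]
  congr 1
  · rw [Finset.sum_congr rfl fun j hj => if_pos (Nat.lt_succ_iff.mp (Finset.mem_range.mp hj)),
      Finset.sum_const, Finset.card_range]
  · rw [Finset.sum_congr rfl fun j _ => if_neg (by omega), Finset.sum_const, Finset.card_range]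

theorem mem_infixes {s l : List ℕ} : s ∈ infixes l ↔ s <:+: l := by
  simp only [infixes, List.mem_flatten, List.mem_map, List.mem_tails,
    List.infix_iff_prefix_suffix]
  aesop

section genLen

variable {k : ℕ}

theorem le_genLen {l s : List ℕ} (hs : s <:+: l) (hk : k ∈ s) (hsk : ∀ x ∈ s, k ≤ x) :
    s.length ≤ genLen l k :=
  List.le_max_of_le (List.mem_map_of_mem <| List.mem_filter.mpr
    ⟨mem_infixes.mpr hs, by simpa [hk] using hsk⟩) le_rfl

theorem genLen_le {l : List ℕ} {c : ℕ}
    (h : ∀ s, s <:+: l → k ∈ s → (∀ x ∈ s, k ≤ x) → s.length ≤ c) : genLen l k ≤ c :=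
  List.max_le_of_forall_le _ _ fun x hx => by
    obtain ⟨s, hs, rfl⟩ := List.mem_map.mp hx
    obtain ⟨hs, hks⟩ := List.mem_filter.mp hs
    simp only [Bool.and_eq_true, List.contains_iff_mem, List.all_eq_true, decide_eq_true_eq] at hks
    exact h s (mem_infixes.mp hs) hks.1 hks.2

theorem genLen_le_length (l : List ℕ) : genLen l k ≤ l.length :=
  genLen_le fun _ hs _ _ => hs.length_le

theorem genLen_append_cons {u w : List ℕ} (hu : k ∉ u) (hw : k ∉ w) :
    genLen (u ++ k :: w) k =
      (u.reverse.takeWhile (k ≤ ·)).length + 1 + (w.takeWhile (k ≤ ·)).length := by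
  apply le_antisymm
  · refine genLen_le fun s ⟨c, d, hl⟩ hks hsk => ?_
    obtain ⟨x, y, rfl⟩ := List.append_of_mem hks
    obtain ⟨rfl, -, rfl⟩ := (List.append_cons_inj_of_notMem hu hw).mp
      (by simpa using hl.symm : u ++ k :: w = (c ++ x) ++ k :: (y ++ d))
    have hx : x.length ≤ ((c ++ x).reverse.takeWhile (k ≤ ·)).length := by
      simpa using (List.prefix_append x.reverse c.reverse).length_le_length_takeWhile
        (p := (k ≤ ·)) (by simpa using fun a ha => hsk a (by simp [ha]))
    have hy : y.length ≤ ((y ++ d).takeWhile (k ≤ ·)).length :=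
      (List.prefix_append y d).length_le_length_takeWhile
        (by simpa using fun a ha => hsk a (by simp [ha]))
    simp only [List.length_append, List.length_cons]
    omega
  · have hs := le_genLen (k := k) (List.infix_append_cons_of_suffix_of_prefix
      (by simpa using (u.reverse.takeWhile_prefix (k ≤ ·)).reverse)
      (w.takeWhile_prefix (k ≤ ·)) k) (by simp) (by
        simp only [List.mem_append, List.mem_reverse, List.mem_cons]
        rintro x (hx | rfl | hx)
        · simpa using List.mem_takeWhile_imp hx
        · exact le_rfl
        · simpa using List.mem_takeWhile_imp hx)
    simp only [List.length_append, List.length_reverse, List.length_cons] at hs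
    omega

theorem genLen_insertIdx_append_cons {u w : List ℕ} {v i : ℕ} (hkv : k ≤ v) (hvk : v ≠ k)
    (hu : k ∉ u) (hw : k ∉ w) (hi : i ≤ u.length) :
    genLen (u.insertIdx i v ++ k :: w) k =
      if u.length - i ≤ (u.reverse.takeWhile (k ≤ ·)).length then genLen (u ++ k :: w) k + 1
      else genLen (u ++ k :: w) k := by
  have hu' : k ∉ u.insertIdx i v := by
    rw [List.mem_insertIdx hi]
    exact not_or.mpr ⟨hvk.symm, hu⟩
  rw [genLen_append_cons hu' hw, genLen_append_cons hu hw, List.reverse_insertIdx v hi,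
    List.length_takeWhile_insertIdx (by simpa using hkv) (by simp)]
  split_ifs <;> omega

theorem genLen_append_cons_insertIdx {u w : List ℕ} {v j : ℕ} (hkv : k ≤ v) (hvk : v ≠ k)
    (hu : k ∉ u) (hw : k ∉ w) (hj : j ≤ w.length) :
    genLen (u ++ k :: w.insertIdx j v) k =
      if j ≤ (w.takeWhile (k ≤ ·)).length then genLen (u ++ k :: w) k + 1
      else genLen (u ++ k :: w) k := by
  have hw' : k ∉ w.insertIdx j v := by
    rw [List.mem_insertIdx hj]
    exact not_or.mpr ⟨hvk.symm, hw⟩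
  rw [genLen_append_cons hu hw', genLen_append_cons hu hw,
    List.length_takeWhile_insertIdx (by simpa using hkv) hj]
  split_ifs <;> omega

theorem genLen_eq_one {l : List ℕ} (hl : l.Nodup) (hk : k ∈ l) (h : ∀ x ∈ l, x ≤ k) :
    genLen l k = 1 := by
  obtain ⟨u, w, rfl⟩ := List.append_of_mem hk
  have hk' : k ∉ u ++ w := (List.nodup_cons.mp (List.nodup_middle.mp hl)).1
  have hlt : ∀ x ∈ u ++ w, ¬ decide (k ≤ x) := fun x hx hkx =>
    hk' (le_antisymm (h x (by simp at hx ⊢; tauto)) (of_decide_eq_true hkx) ▸ hx)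
  rw [genLen_append_cons (by simp_all) (by simp_all),
    List.takeWhile_eq_nil_of_forall_not fun x hx => hlt x (by simp_all),
    List.takeWhile_eq_nil_of_forall_not fun x hx => hlt x (by simp_all)]
  rfl

end genLen

section sums

variable {M : Type*} [AddCommMonoid M]

theorem sum_genLen_insertIdx (f : ℕ → M) {l : List ℕ} {k v : ℕ} (hl : l.Nodup) (hk : k ∈ l)
    (hkv : k ≤ v) (hv : v ∉ l) :
    ∑ i ∈ Finset.range (l.length + 1), f (genLen (l.insertIdx i v) k) =
      (genLen l k + 1) • f (genLen l k + 1) + (l.length - genLen l k) • f (genLen l k) := by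
  have hvk : v ≠ k := by rintro rfl; exact hv hk
  obtain ⟨u, w, rfl⟩ := List.append_of_mem hk
  obtain ⟨hu, hw⟩ : k ∉ u ∧ k ∉ w := by
    simpa using (List.nodup_cons.mp (List.nodup_middle.mp hl)).1
  set a := (u.reverse.takeWhile (k ≤ ·)).length
  set b := (w.takeWhile (k ≤ ·)).length
  set g := genLen (u ++ k :: w) k
  have hg : g = a + 1 + b := genLen_append_cons hu hw
  have ha : a ≤ u.length := by simpa using (u.reverse.takeWhile_prefix (k ≤ ·)).length_le
  have hb : b ≤ w.length := (w.takeWhile_prefix (k ≤ ·)).length_le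
  have hleft : ∑ i ∈ Finset.range (u.length + 1), f (genLen ((u ++ k :: w).insertIdx i v) k) =
      ∑ j ∈ Finset.range (u.length + 1), if j ≤ a then f (g + 1) else f g := by
    rw [← Finset.sum_range_reflect]
    refine Finset.sum_congr rfl fun i hi => ?_
    have hi : i ≤ u.length := Nat.lt_succ_iff.mp (Finset.mem_range.mp hi)
    rw [List.insertIdx_append_of_le_length _ _ (by omega),
      genLen_insertIdx_append_cons hkv hvk hu hw (by omega), apply_ite f,
      show u.length - (u.length + 1 - 1 - i) = i by omega]
  have hright : ∑ j ∈ Finset.range (w.length + 1),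
      f (genLen ((u ++ k :: w).insertIdx (u.length + 1 + j) v) k) =
      ∑ j ∈ Finset.range (w.length + 1), if j ≤ b then f (g + 1) else f g := by
    refine Finset.sum_congr rfl fun j hj => ?_
    rw [show u.length + 1 + j = u.length + (j + 1) by omega, List.insertIdx_length_add_append,
      List.insertIdx_succ_cons, genLen_append_cons_insertIdx hkv hvk hu hw
        (Nat.lt_succ_iff.mp (Finset.mem_range.mp hj)), apply_ite f]
  rw [show (u ++ k :: w).length + 1 = (u.length + 1) + (w.length + 1) by simp; omega,
    Finset.sum_range_add, hleft, hright, Finset.sum_range_succ_ite_le _ _ ha,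
    Finset.sum_range_succ_ite_le _ _ hb, add_add_add_comm, ← add_nsmul, ← add_nsmul]
  congr 2
  · omega
  · simp only [List.length_append, List.length_cons]
    omega

theorem sum_permutations_cons_genLen (f : ℕ → M) {L : List ℕ} {k v : ℕ} (hL : L.Nodup)
    (hk : k ∈ L) (hkv : k ≤ v) (hv : v ∉ L) :
    ((v :: L).permutations.map fun π => f (genLen π k)).sum =
      (L.permutations.map fun σ =>
        (genLen σ k + 1) • f (genLen σ k + 1) + (L.length - genLen σ k) • f (genLen σ k)).sum := by
  rw [((List.permutations_perm_permutations' _).map _).sum_eq,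
    ((List.permutations_perm_permutations' L).map _).sum_eq]
  rw [List.permutations', List.flatMap_def, List.map_flatten, List.sum_flatten, List.map_map,
    List.map_map]
  refine congrArg List.sum (List.map_congr_left fun σ hσ => ?_)
  have hσ : σ.Perm L := List.mem_permutations'.mp hσ
  rw [Function.comp_apply, Function.comp_apply, List.permutations'Aux_eq_map_range, List.map_map,
    ← hσ.length_eq]
  exact sum_genLen_insertIdx f (hσ.nodup_iff.mpr hL) (hσ.mem_iff.mpr hk) hkv
    (mt hσ.mem_iff.mp hv)

def genLenSum (f : ℕ → M) (n k : ℕ) : M :=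
  ((List.range' 1 n).permutations.map fun π => f (genLen π k)).sum

section genLenSum

variable {n k : ℕ}

theorem genLenSum_succ (f : ℕ → M) (hk : 1 ≤ k) (hkn : k ≤ n) :
    genLenSum f (n + 1) k = genLenSum (fun m => (m + 1) • f (m + 1) + (n - m) • f m) n k := by
  have hperm : (List.range' 1 (n + 1)).Perm ((n + 1) :: List.range' 1 n) := by
    rw [List.range'_1_concat, Nat.add_comm]
    exact List.perm_append_singleton _ _
  rw [genLenSum, (hperm.permutations.map _).sum_eq, genLenSum, sum_permutations_cons_genLen f
      List.nodup_range' (by simp; omega) (by omega) (by simp; omega), List.length_range']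

theorem genLenSum_self (f : ℕ → M) (hk : 1 ≤ k) : genLenSum f k k = k.factorial • f 1 := by
  rw [genLenSum, List.map_congr_left fun π hπ => congrArg f ?_, List.map_const',
    List.sum_replicate, List.length_permutations, List.length_range']
  have hπ := List.mem_permutations.mp hπ
  exact genLen_eq_one (hπ.nodup_iff.mpr List.nodup_range') (hπ.mem_iff.mpr (by simp; omega))
    fun x hx => by have := hπ.mem_iff.mp hx; simp at this; omega

theorem genLenSum_congr {f g : ℕ → M} (h : ∀ m ≤ n, f m = g m) :
    genLenSum f n k = genLenSum g n k := by
  refine congrArg List.sum (List.map_congr_left fun π hπ => h _ ?_)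
  simpa [(List.mem_permutations.mp hπ).length_eq] using genLen_le_length π (k := k)

theorem genLenSum_add (f g : ℕ → M) :
    genLenSum (fun m => f m + g m) n k = genLenSum f n k + genLenSum g n k :=
  List.sum_map_add

theorem genLenSum_const (c : M) : genLenSum (fun _ => c) n k = n.factorial • c := by
  rw [genLenSum, List.map_const', List.sum_replicate, List.length_permutations,
    List.length_range']

theorem genLenSum_mul_left {R : Type*} [Semiring R] (r : R) (f : ℕ → R) :
    genLenSum (fun m => r * f m) n k = r * genLenSum f n k :=
  List.sum_map_mul_left _ _ _

end genLenSum

end sums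

section moments

variable {n k : ℕ}

theorem genLenSum_cast_mul_eq (hk : 1 ≤ k) (hkn : k ≤ n) :
    genLenSum (fun m => (m : ℚ)) n k * (k + 1) = n.factorial * (2 * n - k + 1) := by
  induction n, hkn using Nat.le_induction with
  | base =>
    rw [genLenSum_self _ hk, nsmul_eq_mul]
    push_cast
    ring
  | succ n hkn ih =>
    rw [genLenSum_succ _ hk hkn, genLenSum_congr (g := fun m => ((n : ℚ) + 2) * m + 1)
        fun m hm => by push_cast [nsmul_eq_mul, Nat.cast_sub hm]; ring,
      genLenSum_add, genLenSum_mul_left, genLenSum_const, Nat.factorial_succ, nsmul_eq_mul]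
    push_cast
    linear_combination ((n : ℚ) + 2) * ih

theorem genLenSum_cast_sq_mul_eq (hk : 1 ≤ k) (hkn : k ≤ n) :
    genLenSum (fun m => (m : ℚ) ^ 2) n k * ((k + 1) * (k + 2)) =
      n.factorial * ((k + 1) * (k + 2) + 6 * (n - k) * (k + 2) + 6 * (n - k) * (n - k - 1)) := by
  induction n, hkn using Nat.le_induction with
  | base =>
    rw [genLenSum_self _ hk, nsmul_eq_mul]
    push_cast
    ring
  | succ n hkn ih =>
    rw [genLenSum_succ _ hk hkn,
      genLenSum_congr (g := fun m => ((n : ℚ) + 3) * (m : ℚ) ^ 2 + 3 * (m : ℚ) + 1)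
        fun m hm => by push_cast [nsmul_eq_mul, Nat.cast_sub hm]; ring,
      genLenSum_add, genLenSum_add, genLenSum_mul_left, genLenSum_mul_left, genLenSum_const,
      Nat.factorial_succ, nsmul_eq_mul]
    push_cast
    linear_combination ((n : ℚ) + 3) * ih + 3 * ((k : ℚ) + 2) * genLenSum_cast_mul_eq hk hkn

end moments

/-- For a uniformly random permutation `π` of `{1,...,n}` and `1 ≤ k ≤ n`, the
variance of the size of the sub-permutation of `π` generated by the entry `k`
equals `2(n+1)(k-1)(n-k)/((k+1)^2 (k+2))`. -/
theorem variance_genLen (n k : ℕ) (hk1 : 1 ≤ k) (hkn : k ≤ n) :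
    (((List.range' 1 n).permutations.map (fun l => (genLen l k : ℚ) ^ 2)).sum) /
          (n.factorial : ℚ) -
        ((((List.range' 1 n).permutations.map (fun l => (genLen l k : ℚ))).sum) /
            (n.factorial : ℚ)) ^ 2 =
      2 * ((n : ℚ) + 1) * ((k : ℚ) - 1) * ((n : ℚ) - k) /
        (((k : ℚ) + 1) ^ 2 * ((k : ℚ) + 2)) := by
  have hk₁ : (k : ℚ) + 1 ≠ 0 := by positivity
  have hk₂ : (k : ℚ) + 2 ≠ 0 := by positivity
  have h1 := (eq_div_iff hk₁).mpr (genLenSum_cast_mul_eq hk1 hkn)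
  have h2 := (eq_div_iff (mul_ne_zero hk₁ hk₂)).mpr (genLenSum_cast_sq_mul_eq hk1 hkn)
  rw [genLenSum] at h1 h2
  rw [h1, h2]
  field_simp
  ring
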